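/- The lengths e_{n,1} ≤ e_{n,2} of the semi-axes of the ellipse (Aⁿ − I)^{−1} B(0, e^{−nτ}) satisfy C^{−1} ≤ e_{n,1}/λ_{n,2} ≤ C and C^{−1} ≤ e_{n,2}/λ_{n,1} ≤ C for a constant C > 1 depending only on A, where λ_{n,1} = e^{−τn}/|1 − λ₁ⁿ| and λ_{n,2} = e^{−τn}/|λ₂ⁿ − 1|. -/

import Mathlib

/-!
In the eigenbasis `(1, γ), (1, β)` the map `Aⁿ - I` is diagonal with entries `l₂ⁿ - 1` and
`l₁ⁿ - 1`, and `|l₁ⁿ - 1| ≤ 2 ≤ κ |l₂ⁿ - 1|` with `κ` independent of `n`. Measuring vectors by the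
sup norm of their coordinates in this fixed basis costs only a constant factor, so
`‖(Aⁿ - I) x‖ ≲ |l₂ⁿ - 1| ‖x‖` and `|l₁ⁿ - 1| ‖x‖ ≲ ‖(Aⁿ - I) x‖`. These bound the minor semi-axis
from below and the major one from above; the eigenvectors themselves, scaled to the boundary of
the ellipse, give the reverse bounds.
-/

/-- The ellipse `(Aⁿ - I)⁻¹ B(0, e^{-nτ})` (as a subset of Euclidean `ℝ²`). -/
noncomputable def ellipse (A : Matrix (Fin 2) (Fin 2) ℝ) (τ : ℝ) (n : ℕ) :
    Set (EuclideanSpace ℝ (Fin 2)) :=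
  {x | ‖Matrix.toEuclideanLin (A ^ n - 1) x‖ ≤ Real.exp (-(n : ℝ) * τ)}

/-- The length of the major semi-axis of the ellipse: the largest distance from
the centre `0` to a point of the ellipse. -/
noncomputable def semiAxisMajor (A : Matrix (Fin 2) (Fin 2) ℝ) (τ : ℝ) (n : ℕ) : ℝ :=
  sSup (norm '' ellipse A τ n)

/-- The length of the minor semi-axis of the ellipse: the largest radius `ρ`
such that `B(0,ρ)` is contained in the ellipse. -/
noncomputable def semiAxisMinor (A : Matrix (Fin 2) (Fin 2) ℝ) (τ : ℝ) (n : ℕ) : ℝ :=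
  sInf (norm '' (ellipse A τ n)ᶜ)

open Matrix Set

section Sublevel

variable {E : Type*} [NormedAddCommGroup E] [NormedSpace ℝ E]

lemma sInf_norm_compl_sublevel_mem_Icc {T : E →ₗ[ℝ] E} {K μ r : ℝ} {v : E}
    (hK : 0 < K) (hT : ∀ x, ‖T x‖ ≤ K * ‖x‖) (hv : v ≠ 0) (hTv : T v = μ • v) (hμ : μ ≠ 0)
    (hr : 0 ≤ r) :
    sInf (norm '' {x | ‖T x‖ ≤ r}ᶜ) ∈ Icc (r / K) (r / |μ|) := by
  have hμ' : 0 < |μ| := abs_pos.mpr hμ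
  have hv' : 0 < ‖v‖ := norm_pos_iff.mpr hv
  have outside : ∀ a, r / |μ| < a → (a / ‖v‖) • v ∈ {x | ‖T x‖ ≤ r}ᶜ ∧ ‖(a / ‖v‖) • v‖ = a := by
    intro a ha
    have ha₀ : 0 < a := (div_nonneg hr hμ'.le).trans_lt ha
    have hnorm : ‖(a / ‖v‖) • v‖ = a := by
      rw [norm_smul, Real.norm_eq_abs, abs_of_pos (by positivity), div_mul_cancel₀ _ hv'.ne']
    refine ⟨?_, hnorm⟩
    simp only [mem_compl_iff, mem_ofPred_eq, not_le, map_smul, hTv, smul_comm _ μ, norm_smul,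
      hnorm, Real.norm_eq_abs]
    rwa [← div_lt_iff₀' hμ']
  constructor
  · obtain ⟨hx, -⟩ := outside (r / |μ| + 1) (lt_add_one _)
    refine le_csInf ⟨_, mem_image_of_mem _ hx⟩ ?_
    rintro _ ⟨y, hy, rfl⟩
    rw [div_le_iff₀' hK]
    exact (lt_of_not_ge (α := ℝ) hy).le.trans (hT y)
  · refine le_of_forall_gt_imp_ge_of_dense fun a ha => ?_
    obtain ⟨hx, hnorm⟩ := outside a ha
    exact hnorm ▸ csInf_le ⟨0, by rintro _ ⟨y, -, rfl⟩; exact norm_nonneg y⟩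
      (mem_image_of_mem _ hx)

lemma sSup_norm_sublevel_mem_Icc {T : E →ₗ[ℝ] E} {K μ r : ℝ} {v : E}
    (hT : ∀ x, ‖x‖ ≤ K * ‖T x‖) (hv : v ≠ 0) (hTv : T v = μ • v) (hμ : μ ≠ 0) (hr : 0 ≤ r) :
    sSup (norm '' {x | ‖T x‖ ≤ r}) ∈ Icc (r / |μ|) (K * r) := by
  have hμ' : 0 < |μ| := abs_pos.mpr hμ
  have hv' : 0 < ‖v‖ := norm_pos_iff.mpr hv
  have hbound : ∀ y ∈ norm '' {x | ‖T x‖ ≤ r}, y ≤ K * r := by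
    rintro _ ⟨x, hx, rfl⟩
    have hK : 0 ≤ K := by
      by_contra! hK
      nlinarith [hT v, norm_nonneg (T v)]
    exact (hT x).trans (mul_le_mul_of_nonneg_left hx hK)
  set x := (r / |μ| / ‖v‖) • v
  have hnorm : ‖x‖ = r / |μ| := by
    rw [norm_smul, Real.norm_eq_abs, abs_of_nonneg (by positivity), div_mul_cancel₀ _ hv'.ne']
  have hx : x ∈ {x | ‖T x‖ ≤ r} := by
    simp only [mem_ofPred_eq, x, map_smul, hTv, smul_comm _ μ, norm_smul, hnorm, Real.norm_eq_abs]
    rw [mul_div_cancel₀ _ hμ'.ne']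
  exact ⟨hnorm ▸ le_csSup ⟨_, hbound⟩ (mem_image_of_mem _ hx),
    csSup_le ⟨_, mem_image_of_mem _ hx⟩ hbound⟩

end Sublevel

namespace Module.Basis

variable {𝕜 E ι : Type*} [NontriviallyNormedField 𝕜] [NormedAddCommGroup E]
  [NormedSpace 𝕜 E] [Fintype ι] (b : Basis ι 𝕜 E) {T : E →ₗ[𝕜] E} {μ : ι → 𝕜}

lemma repr_map_of_apply_eq_smul (hT : ∀ i, T (b i) = μ i • b i) (x : E) (i : ι) :
    b.repr (T x) i = μ i * b.repr x i := by
  conv_lhs => rw [← b.sum_repr x, map_sum]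
  simp only [map_smul, hT, smul_smul, repr_sum_self, mul_comm]

variable [CompleteSpace 𝕜]

noncomputable def condNum : ℝ :=
  ‖(b.equivFunL : E →L[𝕜] ι → 𝕜)‖ * ‖(b.equivFunL.symm : (ι → 𝕜) →L[𝕜] E)‖

lemma one_le_condNum [Nontrivial E] : 1 ≤ b.condNum :=
  b.equivFunL.one_le_norm_mul_norm_symm

lemma norm_map_le_of_apply_eq_smul (hT : ∀ i, T (b i) = μ i • b i) {M : ℝ} (hM₀ : 0 ≤ M)
    (hM : ∀ i, ‖μ i‖ ≤ M) (x : E) :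
    ‖T x‖ ≤ b.condNum * M * ‖x‖ := by
  set e := b.equivFunL
  have hdiag : ‖e (T x)‖ ≤ M * ‖e x‖ := by
    refine (pi_norm_le_iff_of_nonneg (by positivity)).mpr fun i => ?_
    rw [equivFunL_apply, b.repr_map_of_apply_eq_smul hT, norm_mul]
    exact mul_le_mul (hM i) (norm_le_pi_norm (e x) i) (norm_nonneg _) hM₀
  calc ‖T x‖ = ‖(e.symm : (ι → 𝕜) →L[𝕜] E) (e (T x))‖ := by simp
    _ ≤ ‖(e.symm : (ι → 𝕜) →L[𝕜] E)‖ * (M * ‖(e : E →L[𝕜] ι → 𝕜) x‖) :=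
      (ContinuousLinearMap.le_opNorm _ _).trans (by gcongr; exact hdiag)
    _ ≤ ‖(e.symm : (ι → 𝕜) →L[𝕜] E)‖ * (M * (‖(e : E →L[𝕜] ι → 𝕜)‖ * ‖x‖)) := by
      gcongr; exact ContinuousLinearMap.le_opNorm _ _
    _ = _ := by rw [condNum]; ring

lemma norm_le_of_apply_eq_smul (hT : ∀ i, T (b i) = μ i • b i) {m : ℝ} (hm₀ : 0 < m)
    (hm : ∀ i, m ≤ ‖μ i‖) (x : E) :
    ‖x‖ ≤ b.condNum / m * ‖T x‖ := by
  set e := b.equivFunL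
  have hdiag : ‖e x‖ ≤ ‖e (T x)‖ / m := by
    refine (pi_norm_le_iff_of_nonneg (by positivity)).mpr fun i => ?_
    rw [le_div_iff₀ hm₀]
    calc ‖e x i‖ * m ≤ ‖μ i‖ * ‖e x i‖ := by rw [mul_comm]; gcongr; exact hm i
      _ = ‖e (T x) i‖ := by
        simp only [e, equivFunL_apply, b.repr_map_of_apply_eq_smul hT, norm_mul]
      _ ≤ ‖e (T x)‖ := norm_le_pi_norm _ i
  calc ‖x‖ = ‖(e.symm : (ι → 𝕜) →L[𝕜] E) (e x)‖ := by simp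
    _ ≤ ‖(e.symm : (ι → 𝕜) →L[𝕜] E)‖ * (‖(e : E →L[𝕜] ι → 𝕜) (T x)‖ / m) :=
      (ContinuousLinearMap.le_opNorm _ _).trans (by gcongr; exact hdiag)
    _ ≤ ‖(e.symm : (ι → 𝕜) →L[𝕜] E)‖ * (‖(e : E →L[𝕜] ι → 𝕜)‖ * ‖T x‖ / m) := by
      gcongr; exact ContinuousLinearMap.le_opNorm _ _
    _ = _ := by rw [condNum]; ring

end Module.Basis

namespace Matrix

variable {ι : Type*} [Fintype ι] [DecidableEq ι]

lemma pow_mulVec_of_mulVec_eq_smul {R : Type*} [CommRing R] {A : Matrix ι ι R} {v : ι → R} {l : R}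
    (h : A *ᵥ v = l • v) (n : ℕ) : (A ^ n) *ᵥ v = l ^ n • v := by
  induction n with
  | zero => simp
  | succ n ih => rw [pow_succ, ← mulVec_mulVec, h, mulVec_smul, ih, smul_smul, pow_succ']

lemma toEuclideanLin_pow_sub_one_apply_of_mulVec_eq_smul {A : Matrix ι ι ℝ} {v : ι → ℝ} {l : ℝ}
    (h : A *ᵥ v = l • v) (n : ℕ) :
    toEuclideanLin (A ^ n - 1) (WithLp.toLp 2 v) = (l ^ n - 1) • WithLp.toLp 2 v := by
  rw [toLpLin_apply, sub_mulVec, pow_mulVec_of_mulVec_eq_smul h, one_mulVec, sub_smul, one_smul]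
  rfl

end Matrix

lemma linearIndependent_pair_one_of_ne {γ β : ℝ} (hne : γ ≠ β) :
    LinearIndependent ℝ ![!₂[1, γ], !₂[1, β]] := by
  refine LinearIndependent.pair_iff.mpr fun s t hst => ?_
  have h0 : s + t = 0 := by simpa using congrArg (· 0) hst
  have h1 : s * γ + t * β = 0 := by simpa using congrArg (· 1) hst
  have hs : s * (γ - β) = 0 := by linear_combination h1 - β * h0
  have hs0 : s = 0 := (mul_eq_zero.mp hs).resolve_right (sub_ne_zero.mpr hne)
  exact ⟨hs0, by linear_combination h0 - hs0⟩

lemma sub_one_le_abs_pow_sub_one {x : ℝ} (hx : 1 ≤ |x|) {n : ℕ} (hn : n ≠ 0) :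
    |x| - 1 ≤ |x ^ n - 1| := by
  have := abs_sub_abs_le_abs_sub (x ^ n) 1
  rw [abs_pow, abs_one] at this
  linarith [le_self_pow₀ hx hn]

lemma abs_pow_sub_one_le_two {x : ℝ} (hx : |x| ≤ 1) (n : ℕ) : |x ^ n - 1| ≤ 2 := by
  have := abs_sub (x ^ n) 1
  rw [abs_pow, abs_one] at this
  linarith [pow_le_one₀ (abs_nonneg x) hx (n := n)]

lemma abs_pow_sub_one_le_mul_abs_pow_sub_one {x y : ℝ} (hx : |x| ≤ 1) (hy : 1 < |y|) {n : ℕ}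
    (hn : n ≠ 0) : |x ^ n - 1| ≤ (1 + 2 / (|y| - 1)) * |y ^ n - 1| :=
  calc |x ^ n - 1| ≤ 2 := abs_pow_sub_one_le_two hx n
    _ = 2 / (|y| - 1) * (|y| - 1) := (div_mul_cancel₀ _ (by linarith)).symm
    _ ≤ (1 + 2 / (|y| - 1)) * |y ^ n - 1| := by
      gcongr ?_ * ?_
      · exact le_add_of_nonneg_left zero_le_one
      · exact sub_one_le_abs_pow_sub_one hy.le hn

lemma pow_sub_one_ne_zero {x : ℝ} (hx : |x| ≠ 1) {n : ℕ} (hn : n ≠ 0) : x ^ n - 1 ≠ 0 := by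
  rw [sub_ne_zero]
  intro h
  exact hx ((pow_eq_one_iff_of_nonneg (abs_nonneg x) hn).mp (by rw [← abs_pow, h, abs_one]))

lemma inv_le_div_and_div_le_of_mem_Icc {x a K C : ℝ} (ha : 0 < a) (hK : 0 < K) (hKC : K ≤ C)
    (hx : x ∈ Icc (a / K) (K * a)) : C⁻¹ ≤ x / a ∧ x / a ≤ C := by
  constructor
  · calc C⁻¹ ≤ K⁻¹ := inv_anti₀ hK hKC
      _ ≤ x / a := by rw [le_div_iff₀ ha, inv_mul_eq_div]; exact hx.1
  · exact (div_le_iff₀ ha).mpr (hx.2.trans (by gcongr))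

section SemiAxes

variable {A : Matrix (Fin 2) (Fin 2) ℝ} {b : Module.Basis (Fin 2) ℝ (EuclideanSpace ℝ (Fin 2))}
  {u w κ τ : ℝ} {n : ℕ}

lemma semiAxisMinor_mem_Icc (hT : ∀ i, toEuclideanLin (A ^ n - 1) (b i) = ![u, w] i • b i)
    (hu : u ≠ 0) (hκ : 1 ≤ κ) (hwu : |w| ≤ κ * |u|) :
    semiAxisMinor A τ n ∈ Icc (Real.exp (-n * τ) / |u| / (b.condNum * κ))
      (b.condNum * κ * (Real.exp (-n * τ) / |u|)) := by
  have hc := b.one_le_condNum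
  have hK : 1 ≤ b.condNum * κ := one_le_mul_of_one_le_of_one_le hc hκ
  have hμ : ∀ i : Fin 2, ‖![u, w] i‖ ≤ κ * |u| := Fin.forall_fin_two.mpr
    ⟨le_mul_of_one_le_left (abs_nonneg u) hκ, hwu⟩
  refine Icc_subset_Icc (le_of_eq (by field_simp))
    (le_mul_of_one_le_left (by positivity) hK)
    (sInf_norm_compl_sublevel_mem_Icc (by positivity)
      (b.norm_map_le_of_apply_eq_smul hT (by positivity) hμ) (b.ne_zero 0) (hT 0) hu
      (by positivity))

lemma semiAxisMajor_mem_Icc (hT : ∀ i, toEuclideanLin (A ^ n - 1) (b i) = ![u, w] i • b i)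
    (hw : w ≠ 0) (hκ : 1 ≤ κ) (hwu : |w| ≤ κ * |u|) :
    semiAxisMajor A τ n ∈ Icc (Real.exp (-n * τ) / |w| / (b.condNum * κ))
      (b.condNum * κ * (Real.exp (-n * τ) / |w|)) := by
  have hc := b.one_le_condNum
  have hK : 1 ≤ b.condNum * κ := one_le_mul_of_one_le_of_one_le hc hκ
  have hμ : ∀ i : Fin 2, |w| / κ ≤ ‖![u, w] i‖ := Fin.forall_fin_two.mpr
    ⟨(div_le_iff₀ (by positivity)).mpr (by rw [mul_comm]; exact hwu),
      div_le_self (abs_nonneg w) hκ⟩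
  refine Icc_subset_Icc (div_le_self (by positivity) hK) (le_of_eq (by field_simp))
    (sSup_norm_sublevel_mem_Icc (b.norm_le_of_apply_eq_smul hT (by positivity) hμ)
      (b.ne_zero 1) (hT 1) hw (by positivity))

end SemiAxes

theorem semiAxes_comparable_general (A : Matrix (Fin 2) (Fin 2) ℝ) (l₁ l₂ γ β : ℝ)
    (hne : γ ≠ β)
    (h1 : |l₁| < 1) (h2 : 1 < |l₂|)
    (hγ : A.mulVec ![1, γ] = l₂ • ![1, γ])
    (hβ : A.mulVec ![1, β] = l₁ • ![1, β]) :
    ∃ C : ℝ, 1 < C ∧ ∀ τ : ℝ, 0 < τ → ∀ n : ℕ, 1 ≤ n →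
      (C⁻¹ ≤ semiAxisMinor A τ n / (Real.exp (-τ * n) / |l₂ ^ n - 1|) ∧
        semiAxisMinor A τ n / (Real.exp (-τ * n) / |l₂ ^ n - 1|) ≤ C) ∧
      (C⁻¹ ≤ semiAxisMajor A τ n / (Real.exp (-τ * n) / |1 - l₁ ^ n|) ∧
        semiAxisMajor A τ n / (Real.exp (-τ * n) / |1 - l₁ ^ n|) ≤ C) := by
  obtain ⟨b, hb⟩ : ∃ b : Module.Basis (Fin 2) ℝ (EuclideanSpace ℝ (Fin 2)),
      ⇑b = ![!₂[1, γ], !₂[1, β]] :=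
    ⟨_, coe_basisOfLinearIndependentOfCardEqFinrank (linearIndependent_pair_one_of_ne hne)
      (by simp)⟩
  set κ := 1 + 2 / (|l₂| - 1)
  have hκ : 1 ≤ κ := le_add_of_nonneg_right (div_nonneg zero_le_two (by linarith))
  have hK : 1 ≤ b.condNum * κ := one_le_mul_of_one_le_of_one_le b.one_le_condNum hκ
  refine ⟨b.condNum * κ + 1, by linarith, fun τ _ n hn => ?_⟩
  have hn0 : n ≠ 0 := Nat.one_le_iff_ne_zero.mp hn
  have hu := pow_sub_one_ne_zero h2.ne' hn0
  have hw := pow_sub_one_ne_zero h1.ne hn0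
  have hwu := abs_pow_sub_one_le_mul_abs_pow_sub_one h1.le h2 hn0
  have hT : ∀ i, toEuclideanLin (A ^ n - 1) (b i) = ![l₂ ^ n - 1, l₁ ^ n - 1] i • b i := by
    simp only [hb, Fin.forall_fin_two]
    exact ⟨toEuclideanLin_pow_sub_one_apply_of_mulVec_eq_smul hγ n,
      toEuclideanLin_pow_sub_one_apply_of_mulVec_eq_smul hβ n⟩
  rw [abs_sub_comm 1, show -τ * n = -n * τ by ring]
  exact ⟨inv_le_div_and_div_le_of_mem_Icc (by positivity) (by positivity) (by linarith)
      (semiAxisMinor_mem_Icc (τ := τ) hT hu hκ hwu),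
    inv_le_div_and_div_le_of_mem_Icc (by positivity) (by positivity) (by linarith)
      (semiAxisMajor_mem_Icc (τ := τ) hT hw hκ hwu)⟩

/-- The semi-axes `e_{n,1} ≤ e_{n,2}` of `(Aⁿ - I)⁻¹ B(0, e^{-nτ})` satisfy
`C⁻¹ ≤ e_{n,1}/λ_{n,2} ≤ C` and `C⁻¹ ≤ e_{n,2}/λ_{n,1} ≤ C` for a constant
`C > 1` depending only on `A`, where `λ_{n,1} = e^{-τn}/|1 - λ₁ⁿ|` and
`λ_{n,2} = e^{-τn}/|λ₂ⁿ - 1|`. -/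
theorem semiAxes_comparable (A : Matrix (Fin 2) (Fin 2) ℝ) (l₁ l₂ γ β : ℝ)
    (hne : γ ≠ β)
    (h0 : 0 < |l₁|) (h1 : |l₁| < 1) (h2 : 1 < |l₂|)
    (hγ : A.mulVec ![1, γ] = l₂ • ![1, γ])
    (hβ : A.mulVec ![1, β] = l₁ • ![1, β]) :
    ∃ C : ℝ, 1 < C ∧ ∀ τ : ℝ, 0 < τ → ∀ n : ℕ, 1 ≤ n →
      (C⁻¹ ≤ semiAxisMinor A τ n / (Real.exp (-τ * n) / |l₂ ^ n - 1|) ∧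
        semiAxisMinor A τ n / (Real.exp (-τ * n) / |l₂ ^ n - 1|) ≤ C) ∧
      (C⁻¹ ≤ semiAxisMajor A τ n / (Real.exp (-τ * n) / |1 - l₁ ^ n|) ∧
        semiAxisMajor A τ n / (Real.exp (-τ * n) / |1 - l₁ ^ n|) ≤ C) :=
  semiAxes_comparable_general A l₁ l₂ γ β hne h1 h2 hγ hβ
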